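/- arXiv:2203.03914 — 2 statements merged into one kernel-verified Lean document; each statement's English description precedes it below -/
import Mathlib

section
/- Greedy upper-bound IWE dominates: Let P be a finite set of pixels and for each k ∈ Fin N let B_k ⊆ P be a nonempty 'bounding box' and a_k ∈ B_k the actual landing pixel. Assume the nesting property: for all i < j, if a_i = a_j then B_i ⊆ B_j. Define the greedy image Ī^n recursively: Ī^0 = 0, and Ī^{k+1} increments (one of) the pixels of B_k attaining max_{p∈B_k} Ī^k(p). Define the actual image I^n(p) = #{k < n : a_k = p}. Then for every n ≤ N−1, max_{p∈B_n} Ī^n(p) ≥ I^n(a_n). -/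
/-- Greedy upper-bound IWE dominates: with nested bounding boxes, the greedy
image (always incrementing a maximal pixel in the current bounding box)
dominates the actual count at the landing pixel. -/
theorem greedy_iwe_dominates {P : Type*} [Fintype P] [DecidableEq P]
    (N : ℕ) (B : Fin N → Finset P) (a : Fin N → P)
    (hBne : ∀ k, (B k).Nonempty)
    (haB : ∀ k, a k ∈ B k)
    (hnest : ∀ i j : Fin N, i < j → a i = a j → B i ⊆ B j)
    (Ibar : ℕ → P → ℕ)
    (hbar0 : ∀ p, Ibar 0 p = 0)
    (hstep : ∀ k : Fin N, ∃ q ∈ B k, (∀ p ∈ B k, Ibar k p ≤ Ibar k q) ∧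
      Ibar ((k : ℕ) + 1) = Function.update (Ibar k) q (Ibar k q + 1))
    (Iact : ℕ → P → ℕ)
    (hIact : ∀ n p, Iact n p =
      (Finset.univ.filter (fun k : Fin N => (k : ℕ) < n ∧ a k = p)).card) :
    ∀ n : Fin N, Iact n (a n) ≤ (B n).sup (fun p => Ibar n p) := by
  -- pointwise monotonicity of Ibar in time
  have mono : ∀ t, t ≤ N → ∀ s, s ≤ t → ∀ p, Ibar s p ≤ Ibar t p := by
    intro t
    induction t with
    | zero =>
      intro _ s hs p
      have : s = 0 := Nat.le_zero.mp hs
      subst this; exact le_rfl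
    | succ t ih =>
      intro ht s hs p
      rcases Nat.lt_or_ge s (t + 1) with h | h
      · have h1 : Ibar s p ≤ Ibar t p := ih (by omega) s (by omega) p
        obtain ⟨q, hq, hmax, heq⟩ := hstep ⟨t, by omega⟩
        have h2 : Ibar t p ≤ Ibar (t + 1) p := by
          have heq' : Ibar (t + 1) = Function.update (Ibar t) q (Ibar t q + 1) := heq
          rw [heq']
          by_cases hpq : p = q
          · subst hpq; simp [Function.update]
          · simp [Function.update, hpq]
        exact le_trans h1 h2
      · have : s = t + 1 := by omega
        subst this; exact le_rfl
  have main : ∀ n : ℕ, ∀ hn : n < N,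
      Iact n (a ⟨n, hn⟩) ≤ (B ⟨n, hn⟩).sup (fun p => Ibar n p) := by
    intro n
    induction n using Nat.strong_induction_on with
    | _ n ih =>
      intro hn
      rw [hIact]
      set nn : Fin N := ⟨n, hn⟩ with hnn
      set S := Finset.univ.filter (fun k : Fin N => (k : ℕ) < n ∧ a k = a nn) with hS
      rcases S.eq_empty_or_nonempty with he | hne
      · simp [he]
      · set m := S.max' hne with hm
        have hmS : m ∈ S := S.max'_mem hne
        have hmP : (m : ℕ) < n ∧ a m = a nn := by
          simpa [hS] using hmS
        have hcard : S.card = Iact m (a m) + 1 := by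
          rw [hIact]
          have hset : S = insert m
              (Finset.univ.filter (fun k : Fin N => (k : ℕ) < (m : ℕ) ∧ a k = a m)) := by
            ext k
            simp only [hS, Finset.mem_filter, Finset.mem_univ, true_and, Finset.mem_insert]
            constructor
            · rintro ⟨hk, hak⟩
              have hkm : k ≤ m := S.le_max' k (by simp [hS, hk, hak])
              rcases lt_or_eq_of_le hkm with h | h
              · right; exact ⟨h, hak.trans hmP.2.symm⟩
              · left; exact h
            · rintro (rfl | ⟨hk, hak⟩)
              · exact ⟨hmP.1, hmP.2⟩
              · exact ⟨lt_trans hk hmP.1, hak.trans hmP.2⟩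
          rw [hset, Finset.card_insert_of_notMem (by simp)]
        obtain ⟨q, hqB, hqmax, heq⟩ := hstep m
        have hmlt : m < nn := hmP.1
        have hBsub : B m ⊆ B nn := hnest m nn hmlt hmP.2
        have hsup : (B m).sup (fun p => Ibar m p) ≤ Ibar m q :=
          Finset.sup_le (fun p hp => hqmax p hp)
        have hIH : Iact m (a m) ≤ (B m).sup (fun p => Ibar m p) := by
          have := ih (m : ℕ) hmP.1 m.isLt
          simpa using this
        have h1 : Ibar ((m : ℕ) + 1) q = Ibar m q + 1 := by
          rw [heq]; simp
        have h2 : Ibar ((m : ℕ) + 1) q ≤ Ibar n q :=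
          mono n (le_of_lt hn) ((m : ℕ) + 1) (by omega) q
        have h3 : Ibar n q ≤ (B nn).sup (fun p => Ibar n p) :=
          Finset.le_sup (hBsub hqB)
        omega
  intro n
  have := main (n : ℕ) n.isLt
  simpa using this
end

section
/- Under the hypotheses of the greedy-domination lemma (nonempty boxes B_k ⊆ P, actual pixels a_k ∈ B_k, nesting property: i < j and a_i = a_j implies B_i ⊆ B_j; greedy image Ī^n built by always incrementing a maximal pixel of B_k within Ī^k), the recursively defined upper bound L̄_N given by L̄_0 = 0 and L̄_{k+1} = L̄_k + 1 + 2·max_{p∈B_k} Ī^k(p) satisfies L̄_N ≥ Σ_{p∈P} (I^N(p))², where I^N(p) = #{k < N : a_k = p}. -/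
/-- Theorem 2 (SoS): the recursively computed quantity
`L̄_{k+1} = L̄_k + 1 + 2 · max_{p ∈ B_k} Ī^k(p)` is a valid upper bound on the
Sum of Squares contrast of the actual image of warped events. -/
theorem recursive_upper_bound_sos {P : Type*} [Fintype P] [DecidableEq P]
    (N : ℕ) (B : Fin N → Finset P) (a : Fin N → P)
    (hBne : ∀ k, (B k).Nonempty)
    (haB : ∀ k, a k ∈ B k)
    (hnest : ∀ i j : Fin N, i < j → a i = a j → B i ⊆ B j)
    (Ibar : ℕ → P → ℕ)
    (hbar0 : ∀ p, Ibar 0 p = 0)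
    (hstep : ∀ k : Fin N, ∃ q ∈ B k, (∀ p ∈ B k, Ibar k p ≤ Ibar k q) ∧
      Ibar ((k : ℕ) + 1) = Function.update (Ibar k) q (Ibar k q + 1))
    (Iact : ℕ → P → ℕ)
    (hIact : ∀ n p, Iact n p =
      (Finset.univ.filter (fun k : Fin N => (k : ℕ) < n ∧ a k = p)).card)
    (Lbar : ℕ → ℕ)
    (hLbar0 : Lbar 0 = 0)
    (hLbarStep : ∀ k : Fin N,
      Lbar ((k : ℕ) + 1) = Lbar k + 1 + 2 * (B k).sup (fun p => Ibar k p)) :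
    ∑ p, (Iact N p) ^ 2 ≤ Lbar N := by
  classical
  -- pointwise monotonicity of the greedy image
  have hmono : ∀ (kf : Fin N) (p : P), Ibar (kf : ℕ) p ≤ Ibar ((kf : ℕ) + 1) p := by
    intro kf p
    obtain ⟨q, hqB, hqmax, hupd⟩ := hstep kf
    rw [hupd]
    rcases eq_or_ne p q with rfl | hpq
    · simp
    · rw [Function.update_of_ne hpq]
  -- one-step recursion for the actual image
  have hIsucc : ∀ (kf : Fin N) (p : P),
      Iact ((kf : ℕ) + 1) p = Iact (kf : ℕ) p + (if a kf = p then 1 else 0) := by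
    intro kf p
    rw [hIact, hIact]
    by_cases h : a kf = p
    · rw [if_pos h]
      have hset : (Finset.univ.filter (fun j : Fin N => (j : ℕ) < (kf : ℕ) + 1 ∧ a j = p))
          = insert kf (Finset.univ.filter (fun j : Fin N => (j : ℕ) < (kf : ℕ) ∧ a j = p)) := by
        ext j
        simp only [Finset.mem_insert, Finset.mem_filter, Finset.mem_univ, true_and]
        constructor
        · rintro ⟨hj, hja⟩
          rcases Nat.lt_succ_iff_lt_or_eq.1 hj with h' | h'
          · exact Or.inr ⟨h', hja⟩
          · exact Or.inl (Fin.ext h')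
        · rintro (rfl | ⟨hj, hja⟩)
          · exact ⟨Nat.lt_succ_self _, h⟩
          · exact ⟨Nat.lt_succ_of_lt hj, hja⟩
      rw [hset, Finset.card_insert_of_notMem (by simp)]
    · rw [if_neg h, Nat.add_zero]
      have hset : (Finset.univ.filter (fun j : Fin N => (j : ℕ) < (kf : ℕ) + 1 ∧ a j = p))
          = (Finset.univ.filter (fun j : Fin N => (j : ℕ) < (kf : ℕ) ∧ a j = p)) := by
        ext j
        simp only [Finset.mem_filter, Finset.mem_univ, true_and]
        constructor
        · rintro ⟨hj, hja⟩
          refine ⟨?_, hja⟩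
          rcases Nat.lt_succ_iff_lt_or_eq.1 hj with h' | h'
          · exact h'
          · exfalso
            apply h
            have hjk : j = kf := Fin.ext h'
            rw [← hjk]
            exact hja
        · rintro ⟨hj, hja⟩
          exact ⟨Nat.lt_succ_of_lt hj, hja⟩
      rw [hset]
      rfl
  -- greedy domination lemma
  have hG : ∀ (k : ℕ) (n : Fin N), k ≤ (n : ℕ) →
      Iact k (a n) ≤ (B n).sup (fun p => Ibar k p) := by
    intro k
    induction k with
    | zero => intro n _; simp [hIact]
    | succ k ih =>
      intro n hkn
      have hnN := n.isLt
      have hkN : k < N := by omega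
      have hkf : ((⟨k, hkN⟩ : Fin N) : ℕ) = k := rfl
      obtain ⟨q, hqB, hqmax, hupd⟩ := hstep ⟨k, hkN⟩
      rw [hkf] at hupd
      have hIs := hIsucc ⟨k, hkN⟩ (a n)
      rw [hkf] at hIs
      by_cases hak : a (⟨k, hkN⟩ : Fin N) = a n
      · have hlt : (⟨k, hkN⟩ : Fin N) < n := by
          rw [Fin.lt_def]; omega
        have hsub := hnest ⟨k, hkN⟩ n hlt hak
        have h1 : Iact k (a n) ≤ Ibar k q := by
          have h0 := ih ⟨k, hkN⟩ le_rfl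
          rw [hak] at h0
          exact le_trans h0 (Finset.sup_le fun p hp => hqmax p hp)
        have h2 : Ibar (k + 1) q = Ibar k q + 1 := by
          rw [hupd, Function.update_self]
        calc Iact (k + 1) (a n) = Iact k (a n) + 1 := by rw [hIs, if_pos hak]
          _ ≤ Ibar k q + 1 := by omega
          _ = Ibar (k + 1) q := h2.symm
          _ ≤ (B n).sup (fun p => Ibar (k + 1) p) := Finset.le_sup (hsub hqB)
      · calc Iact (k + 1) (a n) = Iact k (a n) := by rw [hIs, if_neg hak]; ring
          _ ≤ (B n).sup (fun p => Ibar k p) := ih n (by omega)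
          _ ≤ (B n).sup (fun p => Ibar (k + 1) p) :=
              Finset.sup_mono_fun (fun p _ => hmono ⟨k, hkN⟩ p)
  -- main induction
  have hmain : ∀ m : ℕ, m ≤ N → ∑ p, (Iact m p) ^ 2 ≤ Lbar m := by
    intro m
    induction m with
    | zero => intro _; simp [hIact, hLbar0]
    | succ m ih =>
      intro hmN
      have hmN' : m < N := hmN
      have hmf : ((⟨m, hmN'⟩ : Fin N) : ℕ) = m := rfl
      have hIs := hIsucc ⟨m, hmN'⟩
      rw [hmf] at hIs
      have hsum : ∑ p, (Iact (m + 1) p) ^ 2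
          = ∑ p, (Iact m p) ^ 2 + 2 * Iact m (a ⟨m, hmN'⟩) + 1 := by
        rw [← Finset.sum_erase_add Finset.univ _ (Finset.mem_univ (a ⟨m, hmN'⟩)),
            ← Finset.sum_erase_add Finset.univ (fun p => (Iact m p) ^ 2)
              (Finset.mem_univ (a ⟨m, hmN'⟩))]
        have h1 : ∀ p ∈ Finset.univ.erase (a ⟨m, hmN'⟩),
            (Iact (m + 1) p) ^ 2 = (Iact m p) ^ 2 := by
          intro p hp
          have hne : a ⟨m, hmN'⟩ ≠ p := (Finset.ne_of_mem_erase hp).symm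
          rw [hIs p, if_neg hne]; ring
        rw [Finset.sum_congr rfl h1, hIs (a ⟨m, hmN'⟩), if_pos rfl]
        ring
      have hL := hLbarStep ⟨m, hmN'⟩
      simp only [Fin.val_mk] at hL
      rw [hsum, hL]
      have h2 : Iact m (a ⟨m, hmN'⟩) ≤ (B ⟨m, hmN'⟩).sup (fun p => Ibar m p) :=
        hG m ⟨m, hmN'⟩ le_rfl
      have h3 := ih (le_of_lt hmN')
      omega
  exact hmain N le_rfl
end
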